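/- Let f ∈ F_q^0. For all R, S ⊆ V, the Potts means satisfy the GKS-type correlation inequality ⟨f(σ)^R f(σ)^S⟩ ≥ ⟨f(σ)^R⟩ · ⟨f(σ)^S⟩. -/

import Mathlib

open Finset

noncomputable section

variable {V : Type*} [Fintype V] [DecidableEq V]

/-- Kronecker delta `δ_{σ_x,σ_y}` for an unordered edge. -/
def edgeDelta {q : ℕ} (σ : V → Fin q) : Sym2 V → ℝ :=
  Sym2.lift ⟨fun x y => if σ x = σ y then 1 else 0,
    fun x y => by simp [eq_comm]⟩

/-- Boltzmann weight of a spin configuration for the `q`-state Potts model with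
couplings `J` on the edge set `E` and external field `h`. -/
def pottsWeight (q : ℕ) [NeZero q] (E : Finset (Sym2 V)) (J : Sym2 V → ℝ)
    (h : V → ℝ) (σ : V → Fin q) : ℝ :=
  Real.exp ((∑ e ∈ E, J e * edgeDelta σ e) +
    ∑ v : V, h v * (if σ v = 0 then 1 else 0))

/-- The partition function `Z`. -/
def pottsZ (q : ℕ) [NeZero q] (E : Finset (Sym2 V)) (J : Sym2 V → ℝ) (h : V → ℝ) : ℝ :=
  ∑ σ : V → Fin q, pottsWeight q E J h σ

/-- The Potts probability measure `π`. -/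
def pottsPMF (q : ℕ) [NeZero q] (E : Finset (Sym2 V)) (J : Sym2 V → ℝ) (h : V → ℝ)
    (σ : V → Fin q) : ℝ :=
  pottsWeight q E J h σ / pottsZ q E J h

/-- The mean `⟨f(σ)^R⟩ = Σ_σ π(σ) Π_{v ∈ R} f(σ_v)`. -/
def pottsMean (q : ℕ) [NeZero q] (E : Finset (Sym2 V)) (J : Sym2 V → ℝ) (h : V → ℝ)
    (f : Fin q → ℂ) (R : Finset V) : ℂ :=
  ∑ σ : V → Fin q, (pottsPMF q E J h σ : ℂ) * ∏ v ∈ R, f (σ v)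

/-- The mean `⟨f₀(σ)^R f₁(σ)^S⟩`. -/
def pottsMean2 (q : ℕ) [NeZero q] (E : Finset (Sym2 V)) (J : Sym2 V → ℝ) (h : V → ℝ)
    (f₀ f₁ : Fin q → ℂ) (R S : Finset V) : ℂ :=
  ∑ σ : V → Fin q, (pottsPMF q E J h σ : ℂ) *
    ((∏ v ∈ R, f₀ (σ v)) * ∏ v ∈ S, f₁ (σ v))

/-- `E(f(X)^m)` where `X` is uniformly distributed on `Fin q`. -/
def powerMean (q : ℕ) (f : Fin q → ℂ) (m : ℕ) : ℂ :=
  (∑ x : Fin q, f x ^ m) / q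

/-- The class `F_q`: all `f : Fin q → ℂ` such that every `E(f(X)^m)` is real and
nonnegative and `E(f(X)^{m+n}) ≥ E(f(X)^m)·E(f(X)^n)`. -/
def memF (q : ℕ) (f : Fin q → ℂ) : Prop :=
  (∀ m : ℕ, (powerMean q f m).im = 0 ∧ 0 ≤ (powerMean q f m).re) ∧
  ∀ m n : ℕ, (powerMean q f m).re * (powerMean q f n).re ≤ (powerMean q f (m + n)).re

/-- The class `F_q^0`: members of `F_q` with `f(0) = max{|f(x)| : x ∈ Q}`. -/
def memF0 (q : ℕ) [NeZero q] (f : Fin q → ℂ) : Prop :=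
  memF q f ∧ f 0 = (‖f 0‖ : ℂ) ∧
    ∀ x : Fin q, ‖f x‖ ≤ ‖f 0‖


/-!
The field is a coupling to a ghost vertex `none` whose spin is frozen at `0`. Writing
`exp (K δ) = 1 + (exp K - 1) δ` for `δ ∈ {0, 1}` expands the Boltzmann weight Fortuin–Kasteleyn
style as a sum over sets `A` of ghost-graph edges, with weights `∏_{e ∈ A} (exp K_e - 1) ≥ 0`.
The configurations compatible with `A` form an additive subgroup `H_A` of `(Fin q)^V`, in
bijection with the spin assignments to the clusters of `A` giving the ghost cluster spin `0`;
hence the average of `∏ f(σ_v)^{M_v}` over `H_A` factorises into `f(0)^m` for the ghost cluster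
and `E f(X)^m` for the others, `m` being the mass of `M` in the cluster. This cluster weight is
supermultiplicative in `M` by the defining inequality of `F_q`, and increasing in `A`: merging
clusters uses the same inequality, absorbing one into the ghost cluster uses `E f(X)^m ≤ f(0)^m`.
The measure `(∏_{e ∈ A} (exp K_e - 1)) |H_A|` is log-supermodular since
`|H_A| |H_B| = |H_A + H_B| |H_A ∩ H_B|`, `H_A + H_B ≤ H_{A ∩ B}` and `H_A ∩ H_B = H_{A ∪ B}`,
so the FKG inequality applies.
-/

section Moments

variable {q : ℕ} {f : Fin q → ℂ}

lemma powerMean_zero [NeZero q] : powerMean q f 0 = 1 := by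
  simp [powerMean, NeZero.ne q]

lemma memF.ofReal_re_powerMean (hf : memF q f) (m : ℕ) :
    ((powerMean q f m).re : ℂ) = powerMean q f m :=
  Complex.ext rfl (hf.1 m).1.symm

lemma memF.re_powerMean_nonneg (hf : memF q f) (m : ℕ) : 0 ≤ (powerMean q f m).re :=
  (hf.1 m).2

lemma memF.prod_re_powerMean_le [NeZero q] (hf : memF q f) {ι : Type*} (s : Finset ι)
    (m : ι → ℕ) : ∏ i ∈ s, (powerMean q f (m i)).re ≤ (powerMean q f (∑ i ∈ s, m i)).re := by
  induction s using Finset.cons_induction with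
  | empty => simp [powerMean_zero]
  | cons a s ha ih =>
    rw [prod_cons, sum_cons]
    exact (mul_le_mul_of_nonneg_left ih (hf.re_powerMean_nonneg _)).trans (hf.2 _ _)

lemma sum_pow_eq_mul_powerMean [NeZero q] (m : ℕ) :
    ∑ x : Fin q, f x ^ m = q * powerMean q f m := by
  rw [powerMean, mul_div_cancel₀ _ (Nat.cast_ne_zero.mpr (NeZero.ne q))]

lemma memF0.re_powerMean_le_pow [NeZero q] (hf : memF0 q f) (m : ℕ) :
    (powerMean q f m).re ≤ ‖f 0‖ ^ m := by
  have hq : (0 : ℝ) < q := Nat.cast_pos.mpr (NeZero.pos q)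
  calc (powerMean q f m).re ≤ ‖powerMean q f m‖ := Complex.re_le_norm _
    _ = ‖∑ x : Fin q, f x ^ m‖ / q := by simp [powerMean]
    _ ≤ (∑ _x : Fin q, ‖f 0‖ ^ m) / q := by
      gcongr
      refine (norm_sum_le _ _).trans (sum_le_sum fun x _ => ?_)
      rw [norm_pow]
      exact pow_le_pow_left₀ (norm_nonneg _) (hf.2.2 x) m
    _ = ‖f 0‖ ^ m := by simp [hq.ne']

end Moments

lemma AddSubgroup.card_mul_card_eq_card_sup_mul_card_inf {G : Type*} [AddGroup G]
    (H K : AddSubgroup G) [K.Normal] :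
    Nat.card H * Nat.card K = Nat.card ↥(H ⊔ K) * Nat.card ↥(H ⊓ K) := by
  have hH : Nat.card H = Nat.card ↥(H ⊓ K) * K.relIndex H := by
    rw [← relIndex_bot_left H, ← relIndex_mul_relIndex _ _ _ bot_le inf_le_left,
      relIndex_bot_left, inf_relIndex_left]
  have hHK : Nat.card ↥(H ⊔ K) = Nat.card K * K.relIndex H := by
    rw [← relIndex_bot_left (H ⊔ K), ← relIndex_mul_relIndex _ _ _ bot_le le_sup_right,
      relIndex_bot_left, relIndex_sup_right]
  rw [hH, hHK]
  ring

lemma Fintype.prod_sym2_option {α M : Type*} [Fintype α] [DecidableEq α] [CommMonoid M]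
    (F : Sym2 (Option α) → M) :
    ∏ e, F e = (∏ a : Option α, F s(none, a)) * ∏ e : Sym2 α, F (e.map some) := by
  -- `Sym (Option α) 2 ≃ Sym (Option α) 1 ⊕ Sym α 2`: the pairs containing `none`, and the others
  rw [← (Sym2.equivSym _).symm.prod_comp, ← (symOptionSuccEquiv (n := 1)).symm.prod_comp,
    Fintype.prod_sum_type, ← Sym.oneEquiv.prod_comp, ← (Sym2.equivSym _).prod_comp]
  congr 1
  refine Fintype.prod_congr _ _ fun e => ?_
  induction e using Sym2.ind
  rfl

lemma Fintype.prod_pow_ite_mem {ι M : Type*} [Fintype ι] [DecidableEq ι] [CommMonoid M]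
    (s : Finset ι) (a : ι → M) : ∏ i, a i ^ (if i ∈ s then 1 else 0) = ∏ i ∈ s, a i := by
  simp [pow_ite]

lemma Real.exp_mul_ite_one_zero (a : ℝ) (p : Prop) [Decidable p] :
    Real.exp (a * if p then 1 else 0) = 1 + (Real.exp a - 1) * if p then 1 else 0 := by
  split_ifs <;> simp

section Clusters

omit [DecidableEq V]

variable (A B : Finset (Sym2 (Option V)))

def clusterSetoid : Setoid (Option V) := Relation.EqvGen.setoid fun x y => s(x, y) ∈ A

def Cluster : Type _ := Quotient (clusterSetoid A)

instance : Finite (Cluster A) := Quotient.finite _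

instance : Fintype (Cluster A) := Fintype.ofFinite _

instance : DecidableEq (Cluster A) := Classical.decEq _

def cluster (x : Option V) : Cluster A := Quotient.mk _ x

variable {A} in
def Cluster.out (c : Cluster A) : Option V := Quotient.out c

abbrev ghostCluster : Cluster A := cluster A none

def clusterMass (M : V → ℕ) (c : Cluster A) : ℕ := ∑ v with cluster A (some v) = c, M v

variable {A B}

def Cluster.map (hAB : A ⊆ B) : Cluster A → Cluster B :=
  Quotient.map id fun _ _ h => Relation.EqvGen.mono (fun _ _ hxy => hAB hxy) _ _ h

omit [Fintype V] in
lemma Cluster.map_cluster (hAB : A ⊆ B) (x : Option V) :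
    Cluster.map hAB (cluster A x) = cluster B x := rfl

omit [Fintype V] in
lemma cluster_out (c : Cluster A) : cluster A c.out = c := Quotient.out_eq c

lemma clusterMass_add (M N : V → ℕ) (c : Cluster A) :
    clusterMass A (M + N) c = clusterMass A M c + clusterMass A N c :=
  sum_add_distrib

lemma clusterMass_map (hAB : A ⊆ B) (M : V → ℕ) (d : Cluster B) :
    clusterMass B M d = ∑ c with Cluster.map hAB c = d, clusterMass A M c := by
  unfold clusterMass
  rw [sum_fiberwise_eq_sum_filter]
  simp only [mem_filter, mem_univ, true_and, Cluster.map_cluster]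

end Clusters

section Compatible

omit [Fintype V] [DecidableEq V]

variable {q : ℕ} [NeZero q] (A : Finset (Sym2 (Option V)))

def ghostExtend (σ : V → Fin q) : Option V → Fin q
  | none => 0
  | some v => σ v

lemma ghostExtend_add (σ τ : V → Fin q) :
    ghostExtend (σ + τ) = ghostExtend σ + ghostExtend τ := by
  funext x
  cases x <;> simp [ghostExtend]

lemma ghostExtend_neg (σ : V → Fin q) : ghostExtend (-σ) = -ghostExtend σ := by
  funext x
  cases x <;> simp [ghostExtend]

variable (q) in
def compatibleSubgroup : AddSubgroup (V → Fin q) where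
  carrier := {σ | ∀ x y, s(x, y) ∈ A → ghostExtend σ x = ghostExtend σ y}
  zero_mem' := by
    rintro (_ | _) (_ | _) _ <;> rfl
  add_mem' hσ hτ x y hxy := by
    simp only [ghostExtend_add, Pi.add_apply, hσ x y hxy, hτ x y hxy]
  neg_mem' hσ x y hxy := by
    simp only [ghostExtend_neg, Pi.neg_apply, hσ x y hxy]

variable {A}

lemma mem_compatibleSubgroup {σ : V → Fin q} :
    σ ∈ compatibleSubgroup q A ↔ ∀ x y, s(x, y) ∈ A → ghostExtend σ x = ghostExtend σ y :=
  Iff.rfl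

lemma compatibleSubgroup_anti : Antitone (compatibleSubgroup (V := V) q) :=
  fun _ _ hAB _ hσ x y hxy => hσ x y (hAB hxy)

lemma ghostExtend_eq_of_cluster_eq {σ : V → Fin q} (hσ : σ ∈ compatibleSubgroup q A)
    {x y : Option V} (hxy : cluster A x = cluster A y) : ghostExtend σ x = ghostExtend σ y :=
  Setoid.eqvGen_le (s := Setoid.ker (ghostExtend σ)) hσ (Quotient.exact hxy)

variable (q A) in
def clusterSpins (c : Cluster A) : Finset (Fin q) := if c = ghostCluster A then {0} else univ

lemma clusterSpins_ghost : clusterSpins q A (ghostCluster A) = {0} := if_pos rfl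

end Compatible

section CompatibleSum

variable {q : ℕ} [NeZero q] {A B : Finset (Sym2 (Option V))}

instance : DecidablePred (· ∈ compatibleSubgroup q A) := fun _ =>
  decidable_of_iff _ mem_compatibleSubgroup.symm

omit [Fintype V] in
lemma compatibleSubgroup_union :
    compatibleSubgroup q (A ∪ B) = compatibleSubgroup q A ⊓ compatibleSubgroup q B := by
  ext σ
  simp only [AddSubgroup.mem_inf, mem_compatibleSubgroup, mem_union, or_imp, forall_and]

variable (A B) in
lemma card_compatibleSubgroup_mul_le :
    Nat.card (compatibleSubgroup q A) * Nat.card (compatibleSubgroup q B) ≤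
      Nat.card (compatibleSubgroup q (A ∩ B)) * Nat.card (compatibleSubgroup q (A ∪ B)) := by
  rw [AddSubgroup.card_mul_card_eq_card_sup_mul_card_inf, compatibleSubgroup_union]
  exact Nat.mul_le_mul_right _ <| AddSubgroup.card_le_of_le <|
    sup_le (compatibleSubgroup_anti inter_subset_left) (compatibleSubgroup_anti inter_subset_right)

lemma sum_compatibleSubgroup {R : Type*} [AddCommMonoid R] (G : (V → Fin q) → R) :
    ∑ σ with σ ∈ compatibleSubgroup q A, G σ =
      ∑ g ∈ Fintype.piFinset (clusterSpins q A), G fun v => g (cluster A (some v)) := by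
  have hextend : ∀ g ∈ Fintype.piFinset (clusterSpins q A), ∀ x,
      ghostExtend (fun v => g (cluster A (some v))) x = g (cluster A x) := by
    rintro g hg (_ | v)
    · have := Fintype.mem_piFinset.mp hg (ghostCluster A)
      rw [clusterSpins_ghost, mem_singleton] at this
      exact this.symm
    · rfl
  have hrestrict : ∀ σ ∈ compatibleSubgroup q A, ∀ x,
      ghostExtend σ (cluster A x).out = ghostExtend σ x := fun σ hσ x =>
    ghostExtend_eq_of_cluster_eq hσ (cluster_out _)
  refine sum_nbij' (fun σ c => ghostExtend σ c.out) (fun g v => g (cluster A (some v)))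
    ?_ ?_ ?_ ?_ ?_
  · intro σ hσ
    refine Fintype.mem_piFinset.mpr fun c => ?_
    unfold clusterSpins
    split_ifs with hc
    · rw [hc, hrestrict σ (mem_filter.mp hσ).2]
      exact mem_singleton_self _
    · exact mem_univ _
  · intro g hg
    refine mem_filter.mpr ⟨mem_univ _, fun x y hxy => ?_⟩
    rw [hextend g hg, hextend g hg]
    exact congrArg g (Quotient.sound (Relation.EqvGen.rel x y hxy))
  · intro σ hσ
    funext v
    exact hrestrict σ (mem_filter.mp hσ).2 (some v)
  · intro g hg
    funext c
    exact (hextend g hg _).trans (congrArg g (cluster_out c))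
  · intro σ hσ
    congr
    funext v
    exact (hrestrict σ (mem_filter.mp hσ).2 (some v)).symm

end CompatibleSum

section ClusterWeight

omit [DecidableEq V]

variable {q : ℕ} [NeZero q] (f : Fin q → ℂ) (A : Finset (Sym2 (Option V)))

def clusterValue (c : Cluster A) (m : ℕ) : ℝ :=
  if c = ghostCluster A then ‖f 0‖ ^ m else (powerMean q f m).re

def clusterWeight (M : V → ℕ) : ℝ := ∏ c, clusterValue f A c (clusterMass A M c)

variable {f A}

omit [Fintype V] in
lemma memF0.sum_clusterSpins_pow (hf : memF0 q f) (c : Cluster A) (m : ℕ) :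
    ∑ x ∈ clusterSpins q A c, f x ^ m = #(clusterSpins q A c) * clusterValue f A c m := by
  unfold clusterSpins clusterValue
  split_ifs
  · rw [sum_singleton, card_singleton, Nat.cast_one, one_mul, Complex.ofReal_pow]
    nth_rw 1 [hf.2.1]
  · rw [sum_pow_eq_mul_powerMean, card_univ, Fintype.card_fin, hf.1.ofReal_re_powerMean]

omit [Fintype V] in
lemma memF.clusterValue_nonneg (hf : memF q f) (c : Cluster A) (m : ℕ) :
    0 ≤ clusterValue f A c m := by
  unfold clusterValue
  split_ifs
  · positivity
  · exact hf.re_powerMean_nonneg m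

omit [Fintype V] in
lemma memF.clusterValue_mul_le (hf : memF q f) (c : Cluster A) (m n : ℕ) :
    clusterValue f A c m * clusterValue f A c n ≤ clusterValue f A c (m + n) := by
  unfold clusterValue
  split_ifs
  · rw [pow_add]
  · exact hf.2 m n

omit [Fintype V] in
lemma memF0.clusterValue_le_pow (hf : memF0 q f) (c : Cluster A) (m : ℕ) :
    clusterValue f A c m ≤ ‖f 0‖ ^ m := by
  unfold clusterValue
  split_ifs
  · rfl
  · exact hf.re_powerMean_le_pow m

lemma memF.clusterWeight_nonneg (hf : memF q f) (M : V → ℕ) : 0 ≤ clusterWeight f A M :=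
  prod_nonneg fun c _ => hf.clusterValue_nonneg c _

lemma memF.clusterWeight_mul_le (hf : memF q f) (M N : V → ℕ) :
    clusterWeight f A M * clusterWeight f A N ≤ clusterWeight f A (M + N) := by
  rw [clusterWeight, clusterWeight, clusterWeight, ← prod_mul_distrib]
  refine prod_le_prod (fun c _ => mul_nonneg (hf.clusterValue_nonneg c _)
    (hf.clusterValue_nonneg c _)) fun c _ => ?_
  rw [clusterMass_add]
  exact hf.clusterValue_mul_le c _ _

lemma memF0.prod_clusterValue_le (hf : memF0 q f) {B : Finset (Sym2 (Option V))} (hAB : A ⊆ B)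
    (d : Cluster B) (m : Cluster A → ℕ) :
    ∏ c with Cluster.map hAB c = d, clusterValue f A c (m c) ≤
      clusterValue f B d (∑ c with Cluster.map hAB c = d, m c) := by
  by_cases hd : d = ghostCluster B
  · rw [clusterValue, if_pos hd, ← prod_pow_eq_pow_sum]
    exact prod_le_prod (fun c _ => hf.1.clusterValue_nonneg c _)
      fun c _ => hf.clusterValue_le_pow c _
  · have hc : ∀ c ∈ ({c | Cluster.map hAB c = d} : Finset _), c ≠ ghostCluster A :=
      fun c hc hcg => hd (by rw [← (mem_filter.mp hc).2, hcg]; rfl)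
    rw [clusterValue, if_neg hd]
    exact (prod_congr rfl fun c hc' => if_neg (hc c hc')).trans_le
      (hf.1.prod_re_powerMean_le _ _)

lemma memF0.clusterWeight_mono (hf : memF0 q f) (M : V → ℕ) :
    Monotone fun A => clusterWeight f A M := by
  intro A B hAB
  dsimp only [clusterWeight]
  rw [← prod_fiberwise univ (Cluster.map hAB)]
  refine prod_le_prod (fun d _ => prod_nonneg fun c _ => hf.1.clusterValue_nonneg c _)
    fun d _ => ?_
  rw [clusterMass_map hAB M d]
  exact hf.prod_clusterValue_le hAB d _

end ClusterWeight

section Factorization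

variable {q : ℕ} [NeZero q] (f : Fin q → ℂ) (A : Finset (Sym2 (Option V)))

lemma sum_compatibleSubgroup_prod_pow (M : V → ℕ) :
    ∑ σ with σ ∈ compatibleSubgroup q A, ∏ v, f (σ v) ^ M v =
      ∏ c, ∑ x ∈ clusterSpins q A c, f x ^ clusterMass A M c := by
  rw [sum_compatibleSubgroup, prod_univ_sum]
  refine sum_congr rfl fun g _ => ?_
  rw [← prod_fiberwise univ (fun v => cluster A (some v))]
  refine prod_congr rfl fun c _ => ?_
  rw [clusterMass, ← prod_pow_eq_pow_sum]
  exact prod_congr rfl fun v hv => congrArg (fun c => f (g c) ^ M v) (mem_filter.mp hv).2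

lemma card_compatibleSubgroup :
    Nat.card (compatibleSubgroup q A) = ∏ c, #(clusterSpins q A c) := by
  rw [Nat.card_eq_fintype_card, Fintype.card_subtype, card_eq_sum_ones,
    sum_compatibleSubgroup (fun _ => 1), ← card_eq_sum_ones, Fintype.card_piFinset]

variable {f A}

lemma memF0.sum_compatibleSubgroup_prod_pow_eq_card_mul (hf : memF0 q f) (M : V → ℕ) :
    ∑ σ with σ ∈ compatibleSubgroup q A, ∏ v, f (σ v) ^ M v =
      Nat.card (compatibleSubgroup q A) * clusterWeight f A M := by
  rw [sum_compatibleSubgroup_prod_pow, card_compatibleSubgroup, clusterWeight]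
  push_cast
  rw [← prod_mul_distrib]
  exact prod_congr rfl fun c _ => hf.sum_clusterSpins_pow c _

end Factorization

section RandomCluster

variable {q : ℕ} [NeZero q] {E : Finset (Sym2 V)} {J : Sym2 V → ℝ} {h : V → ℝ}

variable (E J h) in
def ghostCoupling : Sym2 (Option V) → ℝ :=
  Sym2.lift ⟨fun x y => match x, y with
    | some a, some b => if s(a, b) ∈ E then Real.exp (J s(a, b)) - 1 else 0
    | some a, none | none, some a => Real.exp (h a) - 1
    | none, none => 0, by
    rintro (_ | a) (_ | b)
    iterate 3 rfl
    dsimp only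
    rw [Sym2.eq_swap]⟩

omit [Fintype V] in
lemma ghostCoupling_nonneg (hJ : ∀ e ∈ E, 0 ≤ J e) (hh : ∀ v, 0 ≤ h v)
    (e : Sym2 (Option V)) : 0 ≤ ghostCoupling E J h e := by
  induction e using Sym2.ind with | _ x y => ?_
  rcases x with _ | a <;> rcases y with _ | b
  · exact le_rfl
  · exact sub_nonneg.mpr (Real.one_le_exp (hh b))
  · exact sub_nonneg.mpr (Real.one_le_exp (hh a))
  · change 0 ≤ if s(a, b) ∈ E then _ else _
    split_ifs with he
    · exact sub_nonneg.mpr (Real.one_le_exp (hJ _ he))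
    · exact le_rfl

omit [Fintype V] [DecidableEq V] [NeZero q] in
lemma exp_mul_edgeDelta (a : ℝ) (σ : V → Fin q) (e : Sym2 V) :
    Real.exp (a * edgeDelta σ e) = 1 + (Real.exp a - 1) * edgeDelta σ e := by
  induction e using Sym2.ind with | _ x y => exact Real.exp_mul_ite_one_zero a _

lemma pottsWeight_eq_prod_ghostCoupling (σ : V → Fin q) :
    pottsWeight q E J h σ = ∏ e, (1 + ghostCoupling E J h e * edgeDelta (ghostExtend σ) e) := by
  have hedges : ∀ e : Sym2 V, 1 + ghostCoupling E J h (e.map some) *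
      edgeDelta (ghostExtend σ) (e.map some) =
        if e ∈ E then Real.exp (J e * edgeDelta σ e) else 1 := by
    intro e
    induction e using Sym2.ind with | _ x y => ?_
    change 1 + (if s(x, y) ∈ E then _ else 0) * edgeDelta σ s(x, y) = _
    split_ifs
    · rw [exp_mul_edgeDelta]
    · ring
  have hfield : ∀ v : V, 1 + ghostCoupling E J h s(none, some v) *
      edgeDelta (ghostExtend σ) s(none, some v) =
        Real.exp (h v * if σ v = 0 then 1 else 0) := by
    intro v
    rw [Real.exp_mul_ite_one_zero]
    change 1 + (Real.exp (h v) - 1) * (if 0 = σ v then 1 else 0) = _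
    simp only [@eq_comm _ (0 : Fin q)]
  rw [Fintype.prod_sym2_option, Fintype.prod_option, pottsWeight, Real.exp_add, Real.exp_sum,
    Real.exp_sum]
  simp only [hedges, hfield, Fintype.prod_ite_mem]
  change _ = (1 + 0 * _) * _ * _
  ring

lemma prod_edgeDelta_ghostExtend (A : Finset (Sym2 (Option V))) (σ : V → Fin q) :
    ∏ e ∈ A, edgeDelta (ghostExtend σ) e = if σ ∈ compatibleSubgroup q A then 1 else 0 := by
  split_ifs with hσ
  · refine prod_eq_one fun e he => ?_
    induction e using Sym2.ind with | _ x y => exact if_pos (hσ x y he)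
  · obtain ⟨x, y, hxy, hne⟩ : ∃ x y, s(x, y) ∈ A ∧ ghostExtend σ x ≠ ghostExtend σ y := by
      simpa [mem_compatibleSubgroup] using hσ
    exact prod_eq_zero hxy (if_neg hne)

variable (q E J h) in
def clusterMeasure (A : Finset (Sym2 (Option V))) : ℝ :=
  (∏ e ∈ A, ghostCoupling E J h e) * Nat.card (compatibleSubgroup q A)

lemma sum_pottsWeight_mul (G : (V → Fin q) → ℂ) :
    ∑ σ, (pottsWeight q E J h σ : ℂ) * G σ =
      ∑ A, ((∏ e ∈ A, ghostCoupling E J h e : ℝ) : ℂ) *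
        ∑ σ with σ ∈ compatibleSubgroup q A, G σ := by
  have hweight : ∀ σ, pottsWeight q E J h σ = ∑ A, (∏ e ∈ A, ghostCoupling E J h e) *
      if σ ∈ compatibleSubgroup q A then 1 else 0 := fun σ => by
    simp only [pottsWeight_eq_prod_ghostCoupling, prod_one_add, powerset_univ, prod_mul_distrib,
      prod_edgeDelta_ghostExtend]
  simp_rw [hweight, Complex.ofReal_sum, sum_mul, sum_filter, mul_sum]
  rw [sum_comm]
  refine sum_congr rfl fun A _ => sum_congr rfl fun σ _ => ?_
  split_ifs <;> simp

lemma pottsZ_eq_sum_clusterMeasure : pottsZ q E J h = ∑ A, clusterMeasure q E J h A := by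
  have hsum := sum_pottsWeight_mul (q := q) (E := E) (J := J) (h := h) fun _ => 1
  simp only [mul_one, sum_const, nsmul_eq_mul, ← Fintype.card_subtype,
    ← Nat.card_eq_fintype_card] at hsum
  unfold pottsZ clusterMeasure
  exact_mod_cast hsum

lemma memF0.sum_pottsWeight_mul_prod_pow {f : Fin q → ℂ} (hf : memF0 q f) (M : V → ℕ) :
    ∑ σ, (pottsWeight q E J h σ : ℂ) * ∏ v, f (σ v) ^ M v =
      ((∑ A, clusterMeasure q E J h A * clusterWeight f A M : ℝ) : ℂ) := by
  rw [sum_pottsWeight_mul, Complex.ofReal_sum]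
  refine sum_congr rfl fun A _ => ?_
  rw [hf.sum_compatibleSubgroup_prod_pow_eq_card_mul, clusterMeasure]
  push_cast
  ring

omit [Fintype V] in
lemma clusterMeasure_nonneg (hJ : ∀ e ∈ E, 0 ≤ J e) (hh : ∀ v, 0 ≤ h v)
    (A : Finset (Sym2 (Option V))) : 0 ≤ clusterMeasure q E J h A :=
  mul_nonneg (prod_nonneg fun e _ => ghostCoupling_nonneg hJ hh e) (Nat.cast_nonneg _)

lemma clusterMeasure_mul_le (hJ : ∀ e ∈ E, 0 ≤ J e) (hh : ∀ v, 0 ≤ h v)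
    (A B : Finset (Sym2 (Option V))) :
    clusterMeasure q E J h A * clusterMeasure q E J h B ≤
      clusterMeasure q E J h (A ⊓ B) * clusterMeasure q E J h (A ⊔ B) := by
  have hcard : (Nat.card (compatibleSubgroup q A) * Nat.card (compatibleSubgroup q B) : ℝ) ≤
      Nat.card (compatibleSubgroup q (A ∩ B)) * Nat.card (compatibleSubgroup q (A ∪ B)) := by
    exact_mod_cast card_compatibleSubgroup_mul_le A B
  calc clusterMeasure q E J h A * clusterMeasure q E J h B
      = ((∏ e ∈ A ∪ B, ghostCoupling E J h e) * ∏ e ∈ A ∩ B, ghostCoupling E J h e) *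
          (Nat.card (compatibleSubgroup q A) * Nat.card (compatibleSubgroup q B) : ℝ) := by
        rw [prod_union_inter, clusterMeasure, clusterMeasure]
        ring
    _ ≤ ((∏ e ∈ A ∪ B, ghostCoupling E J h e) * ∏ e ∈ A ∩ B, ghostCoupling E J h e) *
          (Nat.card (compatibleSubgroup q (A ∩ B)) * Nat.card (compatibleSubgroup q (A ∪ B)) : ℝ) :=
        mul_le_mul_of_nonneg_left hcard <| mul_nonneg
          (prod_nonneg fun e _ => ghostCoupling_nonneg hJ hh e)
          (prod_nonneg fun e _ => ghostCoupling_nonneg hJ hh e)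
    _ = clusterMeasure q E J h (A ⊓ B) * clusterMeasure q E J h (A ⊔ B) := by
        rw [clusterMeasure, clusterMeasure, inf_eq_inter, sup_eq_union]
        ring

end RandomCluster

section Correlation

variable {q : ℕ} [NeZero q] {E : Finset (Sym2 V)} {J : Sym2 V → ℝ} {h : V → ℝ}
  {f : Fin q → ℂ}

lemma pottsZ_pos : 0 < pottsZ q E J h :=
  sum_pos (fun _ _ => Real.exp_pos _) univ_nonempty

variable (q E J h f) in
def clusterMean (M : V → ℕ) : ℝ :=
  (∑ A, clusterMeasure q E J h A * clusterWeight f A M) / ∑ A, clusterMeasure q E J h A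

lemma memF0.sum_pottsPMF_mul_prod_pow (hf : memF0 q f) (M : V → ℕ) :
    ∑ σ, (pottsPMF q E J h σ : ℂ) * ∏ v, f (σ v) ^ M v =
      (clusterMean q E J h f M : ℂ) := by
  simp only [clusterMean, pottsPMF, Complex.ofReal_div, div_mul_eq_mul_div, ← sum_div,
    hf.sum_pottsWeight_mul_prod_pow, pottsZ_eq_sum_clusterMeasure]

lemma memF0.re_pottsMean (hf : memF0 q f) (R : Finset V) :
    (pottsMean q E J h f R).re = clusterMean q E J h f fun v => if v ∈ R then 1 else 0 := by
  rw [← Complex.ofReal_re (clusterMean _ _ _ _ _ _), ← hf.sum_pottsPMF_mul_prod_pow, pottsMean]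
  simp only [Fintype.prod_pow_ite_mem]

lemma memF0.re_pottsMean2 (hf : memF0 q f) (R S : Finset V) :
    (pottsMean2 q E J h f f R S).re = clusterMean q E J h f
      ((fun v => if v ∈ R then 1 else 0) + fun v => if v ∈ S then 1 else 0) := by
  rw [← Complex.ofReal_re (clusterMean _ _ _ _ _ _), ← hf.sum_pottsPMF_mul_prod_pow, pottsMean2]
  simp only [Pi.add_apply, pow_add, prod_mul_distrib, Fintype.prod_pow_ite_mem]

lemma memF0.clusterMean_mul_le (hf : memF0 q f) (hJ : ∀ e ∈ E, 0 ≤ J e)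
    (hh : ∀ v, 0 ≤ h v) (M N : V → ℕ) :
    clusterMean q E J h f M * clusterMean q E J h f N ≤ clusterMean q E J h f (M + N) := by
  unfold clusterMean
  set μ := clusterMeasure q E J h
  have hμ : 0 ≤ μ := clusterMeasure_nonneg hJ hh
  have hZ : 0 < ∑ A, μ A := pottsZ_eq_sum_clusterMeasure (q := q) (E := E) (J := J) ▸ pottsZ_pos
  have hfkg := fkg (fun A => clusterWeight f A M) (fun A => clusterWeight f A N) μ hμ
    (fun A => hf.1.clusterWeight_nonneg (A := A) M) (fun A => hf.1.clusterWeight_nonneg (A := A) N)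
    (hf.clusterWeight_mono M) (hf.clusterWeight_mono N) (clusterMeasure_mul_le hJ hh)
  have hsuper : ∑ A, μ A * (clusterWeight f A M * clusterWeight f A N) ≤
      ∑ A, μ A * clusterWeight f A (M + N) :=
    sum_le_sum fun A _ => mul_le_mul_of_nonneg_left (hf.1.clusterWeight_mul_le M N) (hμ A)
  rw [div_mul_div_comm, div_le_div_iff₀ (mul_pos hZ hZ) hZ]
  calc (∑ A, μ A * clusterWeight f A M) * (∑ A, μ A * clusterWeight f A N) * ∑ A, μ A
      ≤ ((∑ A, μ A) * ∑ A, μ A * (clusterWeight f A M * clusterWeight f A N)) * ∑ A, μ A :=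
        mul_le_mul_of_nonneg_right hfkg hZ.le
    _ ≤ ((∑ A, μ A) * ∑ A, μ A * clusterWeight f A (M + N)) * ∑ A, μ A := by gcongr
    _ = (∑ A, μ A * clusterWeight f A (M + N)) * ((∑ A, μ A) * ∑ A, μ A) := by ring

end Correlation

theorem pottsMean_GKS_general
    (q : ℕ) [NeZero q]
    (E : Finset (Sym2 V))
    (J : Sym2 V → ℝ) (hJ : ∀ e ∈ E, 0 ≤ J e)
    (h : V → ℝ) (hh : ∀ v : V, 0 ≤ h v)
    (f : Fin q → ℂ) (hf : memF0 q f) (R S : Finset V) :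
    (pottsMean q E J h f R).re * (pottsMean q E J h f S).re ≤
      (pottsMean2 q E J h f f R S).re := by
  rw [hf.re_pottsMean, hf.re_pottsMean, hf.re_pottsMean2]
  exact hf.clusterMean_mul_le hJ hh _ _

/-- GKS-type inequality: for `f ∈ F_q^0` and `R, S ⊆ V`,
`⟨f(σ)^R f(σ)^S⟩ ≥ ⟨f(σ)^R⟩ ⟨f(σ)^S⟩`. -/
theorem pottsMean_GKS
    (q : ℕ) [NeZero q] (hq : 2 ≤ q)
    (E : Finset (Sym2 V)) (hE : ∀ e ∈ E, ¬ e.IsDiag)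
    (J : Sym2 V → ℝ) (hJ : ∀ e ∈ E, 0 ≤ J e)
    (h : V → ℝ) (hh : ∀ v : V, 0 ≤ h v)
    (f : Fin q → ℂ) (hf : memF0 q f) (R S : Finset V) :
    (pottsMean q E J h f R).re * (pottsMean q E J h f S).re ≤
      (pottsMean2 q E J h f f R S).re :=
  pottsMean_GKS_general q E J hJ h hh f hf R S
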